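/- Let n ≥ 1, N ≥ 0 and let (ε_{i,j}) (i ∈ {0,…,N}, j ∈ {1,2}) be an admissible family of steps which additionally satisfies ε_{i,2} < ε_{i-1,1}/2 for every i ∈ {1,…,N}. If A ⊆ ℝⁿ is a Borel set with prescribed (ε_{i,j})-steps, then Leb(A) ≤ V_n · ε_{N,2}^n · 3^{nN} · ∏_{i=0}^{N-1} (ε_{i,2}/ε_{i,1})^n, where Leb is Lebesgue measure on ℝⁿ and V_n is the Lebesgue measure of the unit ball of ℝⁿ. -/

import Mathlib

/-!
Induction on `N`. Because `2 ε_{1,2} < ε_{0,1}`, every distance in `A` below `ε_{0,1}` is at most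
`ε_{1,2}`, and `A` has diameter at most `ε_{0,2}`. A maximal `ε_{0,1}`-separated subset `S ⊆ A`
therefore covers `A` by balls of radius `ε_{1,2}`; each of them meets `A` in a set of diameter
`< ε_{0,1}`, which has the shifted steps `(ε_{i+1,j})`, so induction applies to it. The balls of
radius `ε_{0,1}/2` around `S` are disjoint and lie in a ball of radius `3 ε_{0,2}/2`, whence
`|S| ≤ (3 ε_{0,2}/ε_{0,1})^n`.
-/

open MeasureTheory Metric Set Module
open scoped ENNReal Finset

section PseudoMetric

variable {X : Type*} [PseudoMetricSpace X]

theorem exists_pairwise_le_dist_forall_exists_dist_lt (A : Set X) {r : ℝ} (hr : 0 < r) :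
    ∃ S ⊆ A, S.Pairwise (fun x y => r ≤ dist x y) ∧ ∀ a ∈ A, ∃ s ∈ S, dist a s < r := by
  obtain ⟨S, ⟨hSA, hSsep⟩, hmax⟩ := zorn_subset {S | S ⊆ A ∧ S.Pairwise (r ≤ dist · ·)}
    fun c hc hchain => ⟨⋃₀ c, ⟨sUnion_subset fun s hs => (hc hs).1,
      hchain.pairwise_sUnion.2 fun s hs => (hc hs).2⟩, fun _ => subset_sUnion_of_mem⟩
  refine ⟨S, hSA, hSsep, fun a ha => ?_⟩
  by_contra! hfar
  have hins : insert a S ∈ {S | S ⊆ A ∧ S.Pairwise (r ≤ dist · ·)} :=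
    ⟨insert_subset ha hSA, pairwise_insert.2 ⟨hSsep, fun s hs _ =>
      ⟨hfar s hs, dist_comm a s ▸ hfar s hs⟩⟩⟩
  have := hfar a (hmax hins (subset_insert a S) (mem_insert a S))
  rw [dist_self] at this
  linarith

def HasPrescribedSteps (N : ℕ) (ε₁ ε₂ : ℕ → ℝ) (A : Set X) : Prop :=
  ∀ x ∈ A, ∀ y ∈ A, ∃ i ≤ N, dist x y ∈ Icc (ε₁ i) (ε₂ i)

namespace HasPrescribedSteps

variable {N : ℕ} {ε₁ ε₂ : ℕ → ℝ} {A B : Set X} {x y : X}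

theorem mono (h : HasPrescribedSteps N ε₁ ε₂ A) (hBA : B ⊆ A) : HasPrescribedSteps N ε₁ ε₂ B :=
  fun x hx y hy => h x (hBA hx) y (hBA hy)

theorem dist_le (h : HasPrescribedSteps N ε₁ ε₂ A) (hε₂ : AntitoneOn ε₂ (Iic N))
    (hx : x ∈ A) (hy : y ∈ A) : dist x y ≤ ε₂ 0 := by
  obtain ⟨i, hi, -, hle⟩ := h x hx y hy
  exact hle.trans (hε₂ (Nat.zero_le N) hi (Nat.zero_le i))

theorem exists_succ_of_dist_lt (h : HasPrescribedSteps (N + 1) ε₁ ε₂ A) (hx : x ∈ A) (hy : y ∈ A)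
    (hxy : dist x y < ε₁ 0) : ∃ i ≤ N, dist x y ∈ Icc (ε₁ (i + 1)) (ε₂ (i + 1)) := by
  obtain ⟨_ | i, hi, hmem⟩ := h x hx y hy
  · exact absurd hmem.1 hxy.not_ge
  · exact ⟨i, by omega, hmem⟩

theorem tail (h : HasPrescribedSteps (N + 1) ε₁ ε₂ A)
    (hA : ∀ x ∈ A, ∀ y ∈ A, dist x y < ε₁ 0) :
    HasPrescribedSteps N (fun i => ε₁ (i + 1)) (fun i => ε₂ (i + 1)) A :=
  fun x hx y hy => h.exists_succ_of_dist_lt hx hy (hA x hx y hy)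

theorem dist_le_of_dist_lt (h : HasPrescribedSteps (N + 1) ε₁ ε₂ A)
    (hε₂ : AntitoneOn ε₂ (Iic (N + 1))) (hx : x ∈ A) (hy : y ∈ A) (hxy : dist x y < ε₁ 0) :
    dist x y ≤ ε₂ 1 := by
  obtain ⟨i, hi, -, hle⟩ := h.exists_succ_of_dist_lt hx hy hxy
  exact hle.trans (hε₂ (by simp) (by simp [hi]) (by omega))

end HasPrescribedSteps

end PseudoMetric

section NormedSpace

variable {E : Type*} [NormedAddCommGroup E] [NormedSpace ℝ E] [FiniteDimensional ℝ E]

theorem card_le_of_pairwise_le_dist {s : Finset E} {x : E} {R r : ℝ} (hR : 0 ≤ R) (hr : 0 < r)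
    (hs : (s : Set E) ⊆ closedBall x R) (hsep : (s : Set E).Pairwise (r ≤ dist · ·)) :
    (#s : ℝ) ≤ ((2 * R + r) / r) ^ finrank ℝ E := by
  let _ : MeasurableSpace E := borel E
  have : BorelSpace E := ⟨rfl⟩
  set μ : Measure E := Measure.addHaar
  set d := finrank ℝ E
  have hr2 : 0 < r / 2 := by positivity
  have hdisj : (s : Set E).PairwiseDisjoint (fun u => ball u (r / 2)) := fun u hu v hv huv =>
    ball_disjoint_ball (by linarith [hsep hu hv huv])
  have hunion : (⋃ u ∈ s, ball u (r / 2)) ⊆ closedBall x (R + r / 2) := by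
    simp only [iUnion_subset_iff]
    intro u hu y hy
    exact mem_closedBall.2 <| (dist_triangle y u x).trans
      (add_comm (r / 2) R ▸ add_le_add (mem_ball.1 hy).le (mem_closedBall.1 (hs hu)))
  have hV₀ : μ (ball 0 1) ≠ 0 := (measure_ball_pos μ _ one_pos).ne'
  have hV : μ (ball 0 1) ≠ ∞ := measure_ball_lt_top.ne
  have hmeasure : ENNReal.ofReal (#s * (r / 2) ^ d) * μ (ball 0 1) ≤
      ENNReal.ofReal ((R + r / 2) ^ d) * μ (ball 0 1) := calc
    _ = ∑ u ∈ s, μ (ball u (r / 2)) := by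
      simp only [Measure.addHaar_ball_of_pos μ _ hr2, Finset.sum_const, nsmul_eq_mul]
      rw [ENNReal.ofReal_mul (Nat.cast_nonneg _), ENNReal.ofReal_natCast, mul_assoc]
    _ = μ (⋃ u ∈ s, ball u (r / 2)) :=
      (measure_biUnion_finset hdisj fun _ _ => measurableSet_ball).symm
    _ ≤ μ (closedBall x (R + r / 2)) := measure_mono hunion
    _ = ENNReal.ofReal ((R + r / 2) ^ d) * μ (ball 0 1) :=
      Measure.addHaar_closedBall μ _ (by positivity)
  rw [ENNReal.mul_le_mul_iff_left hV₀ hV, ENNReal.ofReal_le_ofReal_iff (by positivity)] at hmeasure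
  rw [div_pow, le_div_iff₀ (by positivity)]
  calc (#s : ℝ) * r ^ d = 2 ^ d * (#s * (r / 2) ^ d) := by
        rw [div_pow]; field_simp
    _ ≤ 2 ^ d * (R + r / 2) ^ d := by gcongr
    _ = (2 * R + r) ^ d := by rw [← mul_pow]; ring_nf

theorem Set.finite_of_pairwise_le_dist {S : Set E} {x : E} {R r : ℝ} (hR : 0 ≤ R) (hr : 0 < r)
    (hS : S ⊆ closedBall x R) (hsep : S.Pairwise (r ≤ dist · ·)) : S.Finite := by
  by_contra hinf
  set K := ((2 * R + r) / r) ^ finrank ℝ E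
  obtain ⟨t, hts, hcard⟩ := Set.Infinite.exists_subset_card_eq hinf (⌊K⌋₊ + 1)
  have hle := card_le_of_pairwise_le_dist hR hr (hts.trans hS) (hsep.mono hts)
  rw [hcard, Nat.cast_add_one] at hle
  linarith [Nat.lt_floor_add_one K]

theorem HasPrescribedSteps.exists_finset_cover {N : ℕ} {ε₁ ε₂ : ℕ → ℝ} {A : Set E}
    (h : HasPrescribedSteps (N + 1) ε₁ ε₂ A) (hε₂ : AntitoneOn ε₂ (Iic (N + 1)))
    (hε₁ : 0 < ε₁ 0) (hε : ε₁ 0 ≤ ε₂ 0) :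
    ∃ S : Finset E, (#S : ℝ) ≤ (3 * (ε₂ 0 / ε₁ 0)) ^ finrank ℝ E ∧
      A ⊆ ⋃ s ∈ S, closedBall s (ε₂ 1) := by
  have hε₂₀ : 0 ≤ ε₂ 0 := hε₁.le.trans hε
  rcases A.eq_empty_or_nonempty with rfl | ⟨x₀, hx₀⟩
  · exact ⟨∅, by simp only [Finset.card_empty, Nat.cast_zero]; positivity, empty_subset _⟩
  obtain ⟨S, hSA, hSsep, hScov⟩ := exists_pairwise_le_dist_forall_exists_dist_lt A hε₁
  have hAball : A ⊆ closedBall x₀ (ε₂ 0) := fun y hy => h.dist_le hε₂ hy hx₀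
  have hSfin := Set.finite_of_pairwise_le_dist hε₂₀ hε₁ (hSA.trans hAball) hSsep
  refine ⟨hSfin.toFinset, ?_, fun a ha => ?_⟩
  · calc (#hSfin.toFinset : ℝ) ≤ ((2 * ε₂ 0 + ε₁ 0) / ε₁ 0) ^ finrank ℝ E :=
          card_le_of_pairwise_le_dist hε₂₀ hε₁ (by simpa using hSA.trans hAball) (by simpa)
      _ ≤ (3 * (ε₂ 0 / ε₁ 0)) ^ finrank ℝ E := by
          gcongr
          rw [mul_div_assoc']
          gcongr
          linarith
  · obtain ⟨s, hs, has⟩ := hScov a ha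
    exact mem_biUnion (hSfin.mem_toFinset.2 hs) (h.dist_le_of_dist_lt hε₂ ha (hSA hs) has)

noncomputable def stepsBound (d N : ℕ) (ε₁ ε₂ : ℕ → ℝ) : ℝ :=
  ε₂ N ^ d * 3 ^ (d * N) * ∏ i ∈ Finset.range N, (ε₂ i / ε₁ i) ^ d

theorem stepsBound_succ (d N : ℕ) (ε₁ ε₂ : ℕ → ℝ) :
    stepsBound d (N + 1) ε₁ ε₂ =
      (3 * (ε₂ 0 / ε₁ 0)) ^ d * stepsBound d N (fun i => ε₁ (i + 1)) (fun i => ε₂ (i + 1)) := by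
  simp only [stepsBound, Finset.prod_range_succ', mul_add, mul_one, pow_add, mul_pow]
  ring

variable [MeasurableSpace E] [BorelSpace E]

theorem HasPrescribedSteps.measure_le (μ : Measure E) [μ.IsAddHaarMeasure] {N : ℕ}
    {ε₁ ε₂ : ℕ → ℝ} {A : Set E} (hpos : ∀ i < N, 0 < ε₂ (i + 1))
    (hlt : ∀ i < N, ε₁ i < ε₂ i) (hsep : ∀ i < N, 2 * ε₂ (i + 1) < ε₁ i)
    (h : HasPrescribedSteps N ε₁ ε₂ A) :
    μ A ≤ μ (ball 0 1) * ENNReal.ofReal (stepsBound (finrank ℝ E) N ε₁ ε₂) := by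
  induction N generalizing ε₁ ε₂ A with
  | zero =>
    rcases A.eq_empty_or_nonempty with rfl | ⟨x₀, hx₀⟩
    · simp
    have hA : A ⊆ closedBall x₀ (ε₂ 0) := fun y hy => by
      obtain ⟨i, hi, -, hle⟩ := h y hy x₀ hx₀
      rwa [Nat.le_zero.1 hi] at hle
    have hε₂ : 0 ≤ ε₂ 0 := dist_self x₀ ▸ hA hx₀
    calc μ A ≤ μ (closedBall x₀ (ε₂ 0)) := measure_mono hA
      _ = _ := by
        rw [Measure.addHaar_closedBall μ _ hε₂, mul_comm]
        simp [stepsBound]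
  | succ N ih =>
    have hε₂ : AntitoneOn ε₂ (Iic (N + 1)) :=
      antitoneOn_of_succ_le ordConnected_Iic fun i _ _ hi => by
        have hi : i < N + 1 := Nat.succ_le_iff.1 hi
        rw [Nat.succ_eq_succ]
        linarith [hpos i hi, hsep i hi, hlt i hi]
    have hε₁ : 0 < ε₁ 0 := by linarith [hpos 0 N.succ_pos, hsep 0 N.succ_pos]
    obtain ⟨S, hcard, hcov⟩ := h.exists_finset_cover hε₂ hε₁ (hlt 0 N.succ_pos).le
    set Q := stepsBound (finrank ℝ E) N (fun i => ε₁ (i + 1)) (fun i => ε₂ (i + 1))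
    have hpiece : ∀ s, μ (A ∩ closedBall s (ε₂ 1)) ≤ μ (ball 0 1) * ENNReal.ofReal Q :=
      fun s => ih (fun i hi => hpos (i + 1) (by omega)) (fun i hi => hlt (i + 1) (by omega))
        (fun i hi => hsep (i + 1) (by omega)) <| (h.mono inter_subset_left).tail fun x hx y hy => by
          linarith [dist_triangle_right x y s, mem_closedBall.1 hx.2, mem_closedBall.1 hy.2,
            hsep 0 N.succ_pos]
    calc μ A = μ (⋃ s ∈ S, A ∩ closedBall s (ε₂ 1)) := by
          rw [← inter_iUnion₂, inter_eq_left.2 hcov]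
      _ ≤ ∑ s ∈ S, μ (A ∩ closedBall s (ε₂ 1)) := measure_biUnion_finset_le S _
      _ ≤ #S * (μ (ball 0 1) * ENNReal.ofReal Q) := by
          simpa using Finset.sum_le_sum fun s _ => hpiece s
      _ ≤ ENNReal.ofReal ((3 * (ε₂ 0 / ε₁ 0)) ^ finrank ℝ E) *
            (μ (ball 0 1) * ENNReal.ofReal Q) := by
          gcongr
          rw [← ENNReal.ofReal_natCast]
          exact ENNReal.ofReal_le_ofReal hcard
      _ = _ := by
          have hratio : 0 ≤ 3 * (ε₂ 0 / ε₁ 0) :=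
            mul_nonneg zero_le_three (div_nonneg (hε₁.trans (hlt 0 N.succ_pos)).le hε₁.le)
          rw [stepsBound_succ, ENNReal.ofReal_mul (pow_nonneg hratio _)]
          ring

end NormedSpace

theorem stmt_0 (n N : ℕ) (ε₁ ε₂ : ℕ → ℝ)
    (hadm : ∀ i < N, 0 < ε₂ (i + 1) ∧ ε₂ (i + 1) < ε₁ i ∧ ε₁ i < ε₂ i)
    (hsep : ∀ i, 1 ≤ i → i ≤ N → ε₂ i < ε₁ (i - 1) / 2)
    (A : Set (EuclideanSpace ℝ (Fin n)))
    (hsteps : ∀ x ∈ A, ∀ y ∈ A, ∃ i ≤ N, ‖x - y‖ ∈ Set.Icc (ε₁ i) (ε₂ i)) :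
    volume A ≤ volume (Metric.ball (0 : EuclideanSpace ℝ (Fin n)) 1) *
      ENNReal.ofReal (ε₂ N ^ n * 3 ^ (n * N) *
        ∏ i ∈ Finset.range N, (ε₂ i / ε₁ i) ^ n) := by
  have hsep' : ∀ i < N, 2 * ε₂ (i + 1) < ε₁ i := fun i hi => by
    have := hsep (i + 1) (by omega) (by omega)
    rw [Nat.add_sub_cancel] at this
    linarith
  have h : HasPrescribedSteps N ε₁ ε₂ A := by
    simpa only [HasPrescribedSteps, dist_eq_norm] using hsteps
  simpa [stepsBound] using h.measure_le volume (fun i hi => (hadm i hi).1)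
    (fun i hi => (hadm i hi).2.2) hsep'
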